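/- arXiv:1010.6036 — 7 statements merged into one kernel-verified Lean document; each statement's English description precedes it below -/
import Mathlib

section
/- If u: V → ℝ^d is a hypersphere representation of a graph G with squared radius t ≤ 1/2, then the map q: i ↦ √2 · (√(1/2 − t) ⊕ u(i)) ∈ ℝ^{1+d} is an orthonormal representation of the complement graph Ḡ, i.e., each q(i) is a unit vector and q(i) ⟂ q(j) whenever i,j are non-adjacent in Ḡ (that is, adjacent in G). -/
open scoped RealInnerProductSpace

def IsUnitDistRep {V : Type*} (G : SimpleGraph V) {d : ℕ}
    (u : V → EuclideanSpace ℝ (Fin d)) : Prop :=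
  ∀ i j, G.Adj i j → ‖u i - u j‖ = 1

def IsHypersphereRep {V : Type*} (G : SimpleGraph V) {d : ℕ}
    (u : V → EuclideanSpace ℝ (Fin d)) (t : ℝ) : Prop :=
  IsUnitDistRep G u ∧ ∀ i, ‖u i‖ ^ 2 = t

noncomputable def hypersphereNumber {V : Type*} (G : SimpleGraph V) : ℝ :=
  sInf {t | ∃ (d : ℕ) (u : V → EuclideanSpace ℝ (Fin d)), IsHypersphereRep G u t}

/-- The lifted map `i ↦ √2 (√(1/2 − t) ⊕ u(i))`. -/
noncomputable def liftRep {V : Type*} {d : ℕ} (t : ℝ)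
    (u : V → EuclideanSpace ℝ (Fin d)) : V → EuclideanSpace ℝ (Fin (d + 1)) :=
  fun i => Real.sqrt 2 •
    (WithLp.equiv 2 (Fin (d + 1) → ℝ)).symm
      (Fin.cons (Real.sqrt (1 / 2 - t)) (WithLp.equiv 2 (Fin d → ℝ) (u i)))

theorem EuclideanSpace.inner_cons {d : ℕ} (a b : ℝ) (x y : EuclideanSpace ℝ (Fin d)) :
    ⟪(WithLp.equiv 2 (Fin (d + 1) → ℝ)).symm (Fin.cons a (WithLp.equiv 2 (Fin d → ℝ) x)),
      (WithLp.equiv 2 (Fin (d + 1) → ℝ)).symm (Fin.cons b (WithLp.equiv 2 (Fin d → ℝ) y))⟫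
      = a * b + ⟪x, y⟫ := by
  simp [PiLp.inner_apply, Fin.sum_univ_succ, mul_comm]

theorem inner_liftRep {V : Type*} {d : ℕ} {t : ℝ} (u : V → EuclideanSpace ℝ (Fin d))
    (ht : t ≤ 1 / 2) (i j : V) :
    ⟪liftRep t u i, liftRep t u j⟫ = 1 - 2 * t + 2 * ⟪u i, u j⟫ := by
  have h2 : √2 * √2 = 2 := Real.mul_self_sqrt zero_le_two
  have ht' : √(1 / 2 - t) * √(1 / 2 - t) = 1 / 2 - t := Real.mul_self_sqrt (by linarith)
  simp only [liftRep, real_inner_smul_left, real_inner_smul_right, EuclideanSpace.inner_cons,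
    ht', ← mul_assoc, h2]
  ring

theorem IsHypersphereRep.inner_eq_of_adj {V : Type*} {G : SimpleGraph V} {d : ℕ} {t : ℝ}
    {u : V → EuclideanSpace ℝ (Fin d)} (hu : IsHypersphereRep G u t) {i j : V}
    (hij : G.Adj i j) : ⟪u i, u j⟫ = t - 1 / 2 := by
  have h := norm_sub_sq_real (u i) (u j)
  rw [hu.1 i j hij, hu.2 i, hu.2 j] at h
  linarith

/-- A hypersphere representation of `G` with squared radius `t ≤ 1/2` lifts to an
orthonormal representation of the complement `Gᶜ`: unit vectors, orthogonal on pairs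
nonadjacent in `Gᶜ` (i.e. adjacent in `G`). -/
theorem liftRep_orthonormalRep {V : Type*} (G : SimpleGraph V) {d : ℕ} {t : ℝ}
    (u : V → EuclideanSpace ℝ (Fin d)) (hu : IsHypersphereRep G u t) (ht : t ≤ 1 / 2) :
    (∀ i, ‖liftRep t u i‖ = 1) ∧
      (∀ i j, G.Adj i j → ⟪liftRep t u i, liftRep t u j⟫ = 0) := by
  refine ⟨fun i => ?_, fun i j hij => ?_⟩
  · have h : ‖liftRep t u i‖ ^ 2 = 1 := by
      rw [← real_inner_self_eq_norm_sq, inner_liftRep u ht, real_inner_self_eq_norm_sq, hu.2 i]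
      ring
    exact (pow_eq_one_iff_of_nonneg (norm_nonneg _) two_ne_zero).mp h
  · rw [inner_liftRep u ht, hu.inner_eq_of_adj hij]
    ring
end

section
/- A graph G is bipartite if and only if its hypersphere number satisfies t(G) ≤ 1/4. Equivalently: G admits a unit-distance representation on a sphere of radius 1/2 centered at the origin if and only if G is bipartite. -/
open scoped RealInnerProductSpace

/-!
For an edge `ij` of a representation on the sphere of squared radius `t`, the parallelogram law
gives `‖u i + u j‖² = 4t - 1`; hence `t ≥ 1/4`, with equality exactly when adjacent vertices are
antipodal. A 2-colouring therefore yields a representation at `t = 1/4` by sending the two colour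
classes to `±1/2` on a line. Conversely, along an odd closed walk of length `n` at `a`, the vector
`u a` is carried to `-u a` by `n` steps of length `√(4t - 1)`, so `1 ≤ 2√t ≤ n √(4t - 1)`.
Thus every representation has `t ≥ 1/4 + 1/(4n²)`, and so does the infimum, which is taken over a
nonempty set because the vertices of a scaled regular simplex form a representation.
-/

theorem SimpleGraph.Walk.norm_sub_neg_one_pow_smul_le {V E : Type*} [SeminormedAddCommGroup E]
    {G : SimpleGraph V} {u : V → E} {ε : ℝ} (hu : ∀ i j, G.Adj i j → ‖u i + u j‖ ≤ ε)
    {a b : V} (p : G.Walk a b) :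
    ‖u a - (-1 : ℤ) ^ p.length • u b‖ ≤ p.length * ε := by
  induction p with
  | nil => simp
  | @cons a c b hac p ih =>
    calc ‖u a - (-1 : ℤ) ^ (p.length + 1) • u b‖
        = ‖(u a + u c) - (u c - (-1 : ℤ) ^ p.length • u b)‖ := by
          rw [pow_succ, mul_smul]; congr 1; module
      _ ≤ ‖u a + u c‖ + ‖u c - (-1 : ℤ) ^ p.length • u b‖ := norm_sub_le _ _
      _ ≤ ε + p.length * ε := add_le_add (hu a c hac) ih
      _ = (p.length + 1 : ℕ) * ε := by push_cast; ring

theorem Orthonormal.norm_sub_sq_eq_two {ι E : Type*} [NormedAddCommGroup E]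
    [InnerProductSpace ℝ E] {v : ι → E} (hv : Orthonormal ℝ v) {i j : ι} (hij : i ≠ j) :
    ‖v i - v j‖ ^ 2 = 2 := by
  rw [norm_sub_sq_real, hv.1 i, hv.1 j, hv.2 hij]
  norm_num

section

variable {V : Type*} {G : SimpleGraph V}

namespace IsHypersphereRep

variable {d : ℕ} {u : V → EuclideanSpace ℝ (Fin d)} {t : ℝ}

theorem norm_add_sq (h : IsHypersphereRep G u t) {i j : V} (hij : G.Adj i j) :
    ‖u i + u j‖ ^ 2 = 4 * t - 1 := by
  have := parallelogram_law_with_norm ℝ (u i) (u j)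
  rw [h.1 i j hij] at this
  nlinarith [h.2 i, h.2 j]

theorem quarter_le (h : IsHypersphereRep G u t) {i j : V} (hij : G.Adj i j) : 1 / 4 ≤ t := by
  nlinarith [h.norm_add_sq hij, sq_nonneg ‖u i + u j‖]

theorem one_le_sq_mul_of_odd_loop (h : IsHypersphereRep G u t) {a : V} (p : G.Walk a a)
    (hp : Odd p.length) : 1 ≤ (p.length : ℝ) ^ 2 * (4 * t - 1) := by
  have ht : 1 / 4 ≤ t := by
    cases p with
    | nil => simp at hp
    | cons hac _ => exact h.quarter_le hac
  have hstep : ∀ i j, G.Adj i j → ‖u i + u j‖ ≤ √(4 * t - 1) := fun i j hij => by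
    rw [← h.norm_add_sq hij, Real.sqrt_sq (norm_nonneg _)]
  have hloop := p.norm_sub_neg_one_pow_smul_le hstep
  rw [hp.neg_one_pow, neg_one_smul, sub_neg_eq_add, ← two_smul ℝ, norm_smul] at hloop
  calc (1 : ℝ) ≤ (2 * ‖u a‖) ^ 2 := by nlinarith [h.2 a]
    _ ≤ (p.length * √(4 * t - 1)) ^ 2 :=
        pow_le_pow_left₀ (by positivity) (by simpa using hloop) 2
    _ = (p.length : ℝ) ^ 2 * (4 * t - 1) := by rw [mul_pow, Real.sq_sqrt (by linarith)]

end IsHypersphereRep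

theorem exists_isHypersphereRep_quarter_of_colorable (h : G.Colorable 2) :
    ∃ (d : ℕ) (u : V → EuclideanSpace ℝ (Fin d)), IsHypersphereRep G u (1 / 4) := by
  obtain ⟨c⟩ := h
  let f : Fin 2 → ℝ := ![1 / 2, -1 / 2]
  refine ⟨1, fun v => EuclideanSpace.single 0 (f (c v)), fun i j hij => ?_, fun i => ?_⟩
  · rw [← dist_eq_norm, PiLp.dist_single_same, Real.dist_eq]
    have hc := c.valid hij
    generalize c i = x, c j = y at hc
    fin_cases x <;> fin_cases y <;> simp [f] at hc ⊢ <;> norm_num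
  · rw [PiLp.norm_single, Real.norm_eq_abs, sq_abs]
    generalize c i = x
    fin_cases x <;> norm_num [f]

theorem exists_isHypersphereRep_half [Finite V] (G : SimpleGraph V) :
    ∃ (d : ℕ) (u : V → EuclideanSpace ℝ (Fin d)), IsHypersphereRep G u (1 / 2) := by
  obtain ⟨n, ⟨e⟩⟩ := Finite.exists_equiv_fin V
  have hv : Orthonormal ℝ fun v => EuclideanSpace.single (e v) (1 : ℝ) :=
    EuclideanSpace.orthonormal_single.comp e e.injective
  refine ⟨n, fun v => √(1 / 2) • EuclideanSpace.single (e v) 1, fun i j hij => ?_, fun i => ?_⟩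
  · rw [← smul_sub, norm_smul, Real.norm_of_nonneg (Real.sqrt_nonneg _),
      ← Real.sqrt_sq (norm_nonneg _), hv.norm_sub_sq_eq_two hij.ne, ← Real.sqrt_mul (by norm_num)]
    norm_num
  · rw [norm_smul, hv.1 i, mul_one, Real.norm_of_nonneg (Real.sqrt_nonneg _),
      Real.sq_sqrt (by norm_num)]

theorem hypersphereNumber_le {t : ℝ} (ht : 0 ≤ t)
    (h : ∃ (d : ℕ) (u : V → EuclideanSpace ℝ (Fin d)), IsHypersphereRep G u t) :
    hypersphereNumber G ≤ t := by
  by_cases hb : BddBelow {t | ∃ (d : ℕ) (u : V → EuclideanSpace ℝ (Fin d)), IsHypersphereRep G u t}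
  · exact csInf_le hb h
  · -- only for empty `V`, where every `t` is attained and `sInf` takes its junk value `0`
    rw [hypersphereNumber, Real.sInf_of_not_bddBelow hb]
    exact ht

theorem le_hypersphereNumber [Finite V] {c : ℝ}
    (h : ∀ (d : ℕ) (u : V → EuclideanSpace ℝ (Fin d)) (t : ℝ), IsHypersphereRep G u t → c ≤ t) :
    c ≤ hypersphereNumber G := by
  obtain ⟨d, u, hu⟩ := exists_isHypersphereRep_half G
  exact le_csInf ⟨_, d, u, hu⟩ fun t ⟨d, u, hu⟩ => h d u t hu

end

/-- A finite graph is bipartite (2-colorable) iff its hypersphere number is at most 1/4. -/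
theorem bipartite_iff_hypersphereNumber_le_quarter {V : Type*} [Fintype V]
    (G : SimpleGraph V) :
    G.Colorable 2 ↔ hypersphereNumber G ≤ 1 / 4 := by
  refine ⟨fun h => hypersphereNumber_le (by norm_num)
    (exists_isHypersphereRep_quarter_of_colorable h), fun h => ?_⟩
  rw [SimpleGraph.two_colorable_iff_forall_loop_even]
  by_contra! ⟨a, p, hp⟩
  rw [Nat.not_even_iff_odd] at hp
  have hn := hp.pos
  have hgap : 0 < 1 / (4 * (p.length : ℝ) ^ 2) := by positivity
  have hlower : 1 / 4 + 1 / (4 * (p.length : ℝ) ^ 2) ≤ hypersphereNumber G :=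
    le_hypersphereNumber fun d u t hu => by
      have hloop := hu.one_le_sq_mul_of_odd_loop p hp
      have : 1 / (4 * (p.length : ℝ) ^ 2) ≤ t - 1 / 4 := by
        rw [div_le_iff₀ (by positivity)]
        linarith
      linarith
  linarith
end

section
/- If G and H are vertex-disjoint graphs, then the hypersphere number of their disjoint union equals the maximum of their hypersphere numbers: t(G + H) = max{t(G), t(H)}. -/
/-!
A representation of `G + H` restricts to representations of `G` and of `H` on the same sphere;
conversely, since no edge joins `G` to `H`, representations of both on spheres of the same radius
can be placed in the orthogonal sum of their ambient spaces. So the attainable squared radii of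
`G + H` are those common to `G` and `H`. These sets are upward closed (add an orthogonal
coordinate of the right length), and the infimum of the intersection of two upward closed sets
of reals is the maximum of their infima.
-/

open scoped RealInnerProductSpace

open Set

theorem IsUpperSet.Ioi_csInf_subset {α : Type*} [ConditionallyCompleteLinearOrder α] {s : Set α}
    (hs : IsUpperSet s) (hne : s.Nonempty) : Ioi (sInf s) ⊆ s := fun _ hx =>
  let ⟨_, ha, hax⟩ := exists_lt_of_csInf_lt hne hx
  hs hax.le ha

theorem IsUpperSet.csInf_inter {α : Type*} [ConditionallyCompleteLinearOrder α]
    [DenselyOrdered α] {s t : Set α} (hs : IsUpperSet s) (ht : IsUpperSet t)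
    (hs₀ : s.Nonempty) (ht₀ : t.Nonempty) (hs₁ : BddBelow s) (ht₁ : BddBelow t) :
    sInf (s ∩ t) = max (sInf s) (sInf t) := by
  refine le_antisymm (le_of_forall_gt_imp_ge_of_dense fun c hc => ?_)
    (le_csInf_inter hs₁ ht₁ ?_)
  · rw [max_lt_iff] at hc
    exact csInf_le (hs₁.mono inter_subset_left)
      ⟨hs.Ioi_csInf_subset hs₀ hc.1, ht.Ioi_csInf_subset ht₀ hc.2⟩
  · obtain ⟨a, ha⟩ := hs₀
    obtain ⟨b, hb⟩ := ht₀
    exact ⟨max a b, hs (le_max_left a b) ha, ht (le_max_right a b) hb⟩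

section

variable {V : Type*} (G : SimpleGraph V)

def hypersphereValues : Set ℝ :=
  {t | ∃ (d : ℕ) (u : V → EuclideanSpace ℝ (Fin d)), IsHypersphereRep G u t}

theorem hypersphereNumber_eq_sInf : hypersphereNumber G = sInf (hypersphereValues G) := rfl

variable {G}

theorem mem_hypersphereValues_of_finiteDimensional {F : Type*} [NormedAddCommGroup F]
    [InnerProductSpace ℝ F] [FiniteDimensional ℝ F] {u : V → F} {t : ℝ}
    (hu : ∀ i j, G.Adj i j → ‖u i - u j‖ = 1) (ht : ∀ i, ‖u i‖ ^ 2 = t) :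
    t ∈ hypersphereValues G :=
  let e := (stdOrthonormalBasis ℝ F).repr
  ⟨_, e ∘ u, fun i j hij => by simpa [← map_sub] using hu i j hij,
    fun i => by simpa using ht i⟩

theorem isUpperSet_hypersphereValues : IsUpperSet (hypersphereValues G) := by
  rintro s t hst ⟨d, u, hu, hs⟩
  refine mem_hypersphereValues_of_finiteDimensional
    (u := fun i => WithLp.toLp 2 (u i, √(t - s))) (fun i j hij => ?_) (fun i => ?_)
  · rw [← WithLp.toLp_sub, Prod.mk_sub_mk, sub_self, WithLp.norm_toLp_fst, hu i j hij]
  · rw [WithLp.prod_norm_sq_eq_of_L2]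
    simp [hs, Real.sq_sqrt (sub_nonneg.2 hst)]

theorem hypersphereValues_sum {W : Type*} {H : SimpleGraph W} :
    hypersphereValues (G ⊕g H) = hypersphereValues G ∩ hypersphereValues H := by
  ext t
  constructor
  · rintro ⟨d, u, hu, ht⟩
    exact ⟨⟨d, u ∘ Sum.inl, fun i j hij => hu _ _ hij, fun i => ht _⟩,
      ⟨d, u ∘ Sum.inr, fun i j hij => hu _ _ hij, fun i => ht _⟩⟩
  · rintro ⟨⟨d, u, hu, hut⟩, ⟨e, v, hv, hvt⟩⟩
    refine mem_hypersphereValues_of_finiteDimensional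
      (u := Sum.elim (fun i => WithLp.toLp 2 (u i, 0)) (fun j => WithLp.toLp 2 (0, v j)))
      ?_ ?_
    · rintro (i | i) (j | j) hij <;>
        simp only [SimpleGraph.sum_adj, Sum.elim_inl, Sum.elim_inr] at hij ⊢
      · rw [← WithLp.toLp_sub, Prod.mk_sub_mk, sub_self, WithLp.norm_toLp_fst, hu i j hij]
      · rw [← WithLp.toLp_sub, Prod.mk_sub_mk, sub_self, WithLp.norm_toLp_snd, hv i j hij]
    · rintro (i | i) <;> simp [hut, hvt]

/-- The vertices of a regular simplex with unit edges. -/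
theorem one_half_mem_hypersphereValues [Fintype V] : (1 / 2 : ℝ) ∈ hypersphereValues G := by
  classical
  have hsingle := EuclideanSpace.orthonormal_single (𝕜 := ℝ) (ι := V)
  refine mem_hypersphereValues_of_finiteDimensional
    (u := fun i => (√2)⁻¹ • EuclideanSpace.single i (1 : ℝ))
    (fun i j hij => ?_) (fun i => ?_)
  · rw [← sq_eq_sq₀ (norm_nonneg _) zero_le_one, ← smul_sub, norm_smul, mul_pow,
      norm_sub_sq_real, hsingle.1, hsingle.1, hsingle.2 hij.ne]
    norm_num
  · simp [norm_smul, hsingle.1]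

theorem nonneg_of_mem_hypersphereValues [Nonempty V] {t : ℝ} (ht : t ∈ hypersphereValues G) :
    0 ≤ t := by
  obtain ⟨d, u, -, hu⟩ := ht
  exact hu (Classical.arbitrary V) ▸ sq_nonneg _

theorem bddBelow_hypersphereValues [Nonempty V] : BddBelow (hypersphereValues G) :=
  ⟨0, fun _ => nonneg_of_mem_hypersphereValues⟩

theorem hypersphereValues_eq_univ [IsEmpty V] : hypersphereValues G = univ :=
  eq_univ_of_forall fun _ => ⟨0, isEmptyElim, isEmptyElim, isEmptyElim⟩

/-- Every real is a squared radius of a graph without vertices; `sInf` of the unbounded set `univ`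
is `0` by convention. -/
theorem hypersphereNumber_of_isEmpty [IsEmpty V] : hypersphereNumber G = 0 := by
  rw [hypersphereNumber_eq_sInf, hypersphereValues_eq_univ]
  exact Real.sInf_of_not_bddBelow not_bddBelow_univ

theorem hypersphereNumber_nonneg : 0 ≤ hypersphereNumber G := by
  rcases isEmpty_or_nonempty V with hV | hV
  · exact (hypersphereNumber_of_isEmpty).ge
  · exact Real.sInf_nonneg fun _ => nonneg_of_mem_hypersphereValues

end

/-- The hypersphere number of a disjoint union is the max of the hypersphere numbers. -/
theorem hypersphereNumber_sum {α β : Type*} [Fintype α] [Fintype β]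
    (G : SimpleGraph α) (H : SimpleGraph β) :
    hypersphereNumber (G ⊕g H) = max (hypersphereNumber G) (hypersphereNumber H) := by
  rcases isEmpty_or_nonempty α with hα | hα
  · rw [hypersphereNumber_of_isEmpty (G := G), max_eq_right hypersphereNumber_nonneg,
      hypersphereNumber_eq_sInf, hypersphereNumber_eq_sInf, hypersphereValues_sum,
      hypersphereValues_eq_univ (G := G), univ_inter]
  rcases isEmpty_or_nonempty β with hβ | hβ
  · rw [hypersphereNumber_of_isEmpty (G := H), max_eq_left hypersphereNumber_nonneg,
      hypersphereNumber_eq_sInf, hypersphereNumber_eq_sInf, hypersphereValues_sum,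
      hypersphereValues_eq_univ (G := H), inter_univ]
  rw [hypersphereNumber_eq_sInf, hypersphereValues_sum]
  exact isUpperSet_hypersphereValues.csInf_inter isUpperSet_hypersphereValues
    ⟨_, one_half_mem_hypersphereValues⟩ ⟨_, one_half_mem_hypersphereValues⟩
    bddBelow_hypersphereValues bddBelow_hypersphereValues
end

section
/- For the complete graph K_n, the set of positive semidefinite matrices X with X_{ii} − 2X_{ij} + X_{jj} = 1 for all i ≠ j equals the set of matrices of the form (y·𝟙ᵀ + 𝟙·yᵀ + 2I)/4 where y ∈ ℝⁿ satisfies ‖𝟙‖·‖y‖ ≤ ⟨𝟙, y⟩ + 2 (here 𝟙 is the all-ones vector). -/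
/-!
With `y i = 2 X i i - 1`, the distance constraints alone force `X = (y𝟙ᵀ + 𝟙yᵀ + 2I)/4`, whose
quadratic form is `x ↦ (⟪x, 𝟙⟫⟪x, y⟫ + ‖x‖²)/2`. In any real inner product space,
`x ↦ ⟪x, u⟫⟪x, v⟫ + ‖x‖²` is nonnegative iff `‖u‖‖v‖ ≤ ⟪u, v⟫ + 2`: the lower bound
`2⟪x, u⟫⟪x, v⟫ ≥ (⟪u, v⟫ - ‖u‖‖v‖)‖x‖²` is Cauchy–Schwarz for `u` against the reflection of `v`
in `x^⊥`, and the test vector `‖v‖u - ‖u‖v` shows that it is sharp.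
-/

open Matrix
open scoped RealInnerProductSpace

variable {E : Type*} [NormedAddCommGroup E] [InnerProductSpace ℝ E]

theorem inner_sub_two_mul_inner_mul_inner_le (u v x : E) :
    ⟪u, v⟫ * ‖x‖ ^ 2 - 2 * ⟪x, u⟫ * ⟪x, v⟫ ≤ ‖u‖ * ‖v‖ * ‖x‖ ^ 2 := by
  -- `‖x‖⁻² • w` is the reflection of `v` in `x^⊥`
  set w : E := ‖x‖ ^ 2 • v - (2 * ⟪x, v⟫) • x
  have hinner : ⟪u, w⟫ = ⟪u, v⟫ * ‖x‖ ^ 2 - 2 * ⟪x, u⟫ * ⟪x, v⟫ := by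
    simp only [w, inner_sub_right, inner_smul_right, real_inner_comm u x]
    ring
  have hnorm : ‖w‖ = ‖v‖ * ‖x‖ ^ 2 := by
    have : ‖w‖ ^ 2 = (‖v‖ * ‖x‖ ^ 2) ^ 2 := by
      simp only [w, norm_sub_sq_real, norm_smul, inner_smul_left, inner_smul_right,
        Real.norm_eq_abs, abs_pow, abs_mul, real_inner_comm x v, conj_trivial]
      simp only [mul_pow, sq_abs, abs_two, abs_norm]
      ring
    exact (pow_left_inj₀ (norm_nonneg _) (by positivity) two_ne_zero).1 this
  calc ⟪u, v⟫ * ‖x‖ ^ 2 - 2 * ⟪x, u⟫ * ⟪x, v⟫ = ⟪u, w⟫ := hinner.symm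
    _ ≤ ‖u‖ * ‖w‖ := real_inner_le_norm u w
    _ = ‖u‖ * ‖v‖ * ‖x‖ ^ 2 := by rw [hnorm, mul_assoc]

theorem forall_inner_mul_inner_add_norm_sq_nonneg_iff (u v : E) :
    (∀ x : E, 0 ≤ ⟪x, u⟫ * ⟪x, v⟫ + ‖x‖ ^ 2) ↔ ‖u‖ * ‖v‖ ≤ ⟪u, v⟫ + 2 := by
  constructor
  · intro h
    have hx := h (‖v‖ • u - ‖u‖ • v)
    have hcs : -(‖u‖ * ‖v‖) ≤ ⟪u, v⟫ := neg_le_of_abs_le (abs_real_inner_le_norm u v)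
    have key : ⟪‖v‖ • u - ‖u‖ • v, u⟫ * ⟪‖v‖ • u - ‖u‖ • v, v⟫ + ‖‖v‖ • u - ‖u‖ • v‖ ^ 2
        = ‖u‖ * ‖v‖ * (‖u‖ * ‖v‖ - ⟪u, v⟫) * (2 - (‖u‖ * ‖v‖ - ⟪u, v⟫)) := by
      simp only [norm_sub_sq_real, inner_sub_left, inner_smul_left, inner_smul_right, norm_smul,
        real_inner_self_eq_norm_sq, Real.norm_eq_abs, abs_norm, real_inner_comm u v,
        Real.ringHom_apply]
      ring
    rw [key] at hx
    by_contra! hlt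
    have hpos : 0 < ‖u‖ * ‖v‖ := by linarith
    nlinarith [mul_pos (mul_pos hpos (by linarith : 0 < ‖u‖ * ‖v‖ - ⟪u, v⟫))
      (by linarith : 0 < ‖u‖ * ‖v‖ - ⟪u, v⟫ - 2)]
  · intro h x
    nlinarith [inner_sub_two_mul_inner_mul_inner_le u v x, sq_nonneg ‖x‖]

section

variable {ι : Type*} [DecidableEq ι]

noncomputable def completeGraphGram (y : ι → ℝ) : Matrix ι ι ℝ :=
  (1 / 4 : ℝ) •
    (vecMulVec y (fun _ => 1) + vecMulVec (fun _ => 1) y + (2 : ℝ) • (1 : Matrix ι ι ℝ))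

theorem completeGraphGram_apply (y : ι → ℝ) (i j : ι) :
    completeGraphGram y i j = (y i + y j + if i = j then 2 else 0) / 4 := by
  simp only [completeGraphGram, Matrix.smul_apply, Matrix.add_apply, vecMulVec_apply, mul_one,
    one_mul, one_apply, smul_eq_mul, mul_ite, mul_zero]
  ring

theorem completeGraphGram_isHermitian (y : ι → ℝ) : (completeGraphGram y).IsHermitian :=
  IsHermitian.ext fun i j => by
    simp only [star_trivial, completeGraphGram_apply, eq_comm (a := j)]
    ring

theorem dotProduct_completeGraphGram_mulVec [Fintype ι] (y x : ι → ℝ) :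
    x ⬝ᵥ (completeGraphGram y *ᵥ x) = (((fun _ => 1) ⬝ᵥ x) * (y ⬝ᵥ x) + x ⬝ᵥ x) / 2 := by
  simp only [completeGraphGram, smul_mulVec, add_mulVec, vecMulVec_mulVec, one_mulVec,
    dotProduct_smul, dotProduct_add]
  simp only [dotProduct_comm x, MulOpposite.smul_eq_mul_unop, MulOpposite.unop_op, smul_eq_mul]
  ring

theorem posSemidef_completeGraphGram_iff [Fintype ι] (y : ι → ℝ) :
    (completeGraphGram y).PosSemidef ↔
      √(Fintype.card ι) * √(∑ i, y i ^ 2) ≤ ∑ i, y i + 2 := by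
  have hnorm (v : ι → ℝ) : ‖(WithLp.toLp 2 v : EuclideanSpace ℝ ι)‖ = √(∑ i, v i ^ 2) := by
    simp [EuclideanSpace.norm_eq]
  have key := forall_inner_mul_inner_add_norm_sq_nonneg_iff
    (WithLp.toLp 2 (fun _ => (1 : ℝ)) : EuclideanSpace ℝ ι) (WithLp.toLp 2 y)
  rw [hnorm, hnorm, EuclideanSpace.inner_toLp_toLp,
    (WithLp.equiv 2 (ι → ℝ)).forall_congr_left] at key
  simp only [one_pow, Finset.sum_const, Finset.card_univ, nsmul_one, dotProduct, Pi.star_apply,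
    star_trivial, mul_one] at key
  rw [posSemidef_iff_dotProduct_mulVec, and_iff_right (completeGraphGram_isHermitian y), ← key]
  refine forall_congr' fun x => ?_
  rw [star_trivial, dotProduct_completeGraphGram_mulVec, ← real_inner_self_eq_norm_sq,
    le_div_iff₀ two_pos, zero_mul]
  rfl

theorem completeGraphGram_sub_two_mul_add {y : ι → ℝ} {i j : ι} (hij : i ≠ j) :
    completeGraphGram y i i - 2 * completeGraphGram y i j + completeGraphGram y j j = 1 := by
  simp only [completeGraphGram_apply, if_pos, if_neg hij]
  ring

theorem eq_completeGraphGram_of_sub_two_mul_add {X : Matrix ι ι ℝ}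
    (hX : ∀ i j, i ≠ j → X i i - 2 * X i j + X j j = 1) :
    X = completeGraphGram fun i => 2 * X i i - 1 := by
  ext i j
  rw [completeGraphGram_apply]
  split_ifs with hij
  · subst hij; ring
  · linarith [hX i j hij]

end

/-- The feasible Gram matrices of unit-distance representations of `Kₙ`:
PSD matrices with `X_{ii} − 2X_{ij} + X_{jj} = 1` for all `i ≠ j` are exactly the matrices
`(y𝟙ᵀ + 𝟙yᵀ + 2I)/4` with `‖𝟙‖‖y‖ ≤ ⟨𝟙, y⟩ + 2`. -/
theorem unitDistGram_completeGraph (n : ℕ) :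
    {X : Matrix (Fin n) (Fin n) ℝ | X.PosSemidef ∧
      ∀ i j, i ≠ j → X i i - 2 * X i j + X j j = 1}
    = {X : Matrix (Fin n) (Fin n) ℝ | ∃ y : Fin n → ℝ,
        Real.sqrt n * Real.sqrt (∑ i, y i ^ 2) ≤ (∑ i, y i) + 2 ∧
        X = (1 / 4 : ℝ) •
          (vecMulVec y (fun _ => 1) + vecMulVec (fun _ => 1) y +
            (2 : ℝ) • (1 : Matrix (Fin n) (Fin n) ℝ))} := by
  ext X
  constructor
  · rintro ⟨hpsd, hdist⟩
    have hX := eq_completeGraphGram_of_sub_two_mul_add hdist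
    rw [hX, posSemidef_completeGraphGram_iff, Fintype.card_fin] at hpsd
    exact ⟨_, hpsd, hX⟩
  · rintro ⟨y, hy, rfl⟩
    refine ⟨(posSemidef_completeGraphGram_iff y).2 ?_, fun i j hij =>
      completeGraphGram_sub_two_mul_add hij⟩
    rwa [Fintype.card_fin]
end

section
/- Let G be a connected graph with Laplacian operator 𝓛_G and let W be a symmetric V×V matrix. There exists z ∈ ℝ^E with W − 𝓛_G(z) positive definite if and only if 𝟙ᵀW𝟙 > 0, where 𝟙 is the all-ones vector. -/
open Matrix

/-- The Laplacian map `𝓛_G : ℝ^E → Sym(V)`, here applied to a symmetric edge-weighting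
`z` (so that `lapOfWeights G z = ∑_{{i,j} ∈ E} 2 z_{ij} (e_i − e_j)(e_i − e_j)ᵀ`, which
ranges over exactly the image of `𝓛_G` as `z` ranges over symmetric weightings). -/
noncomputable def lapOfWeights {V : Type*} [Fintype V] [DecidableEq V]
    (G : SimpleGraph V) [DecidableRel G.Adj] (z : V → V → ℝ) : Matrix V V ℝ :=
  ∑ i, ∑ j, if G.Adj i j then
    z i j • vecMulVec (Pi.single i (1 : ℝ) - Pi.single j 1)
      (Pi.single i (1 : ℝ) - Pi.single j 1)
  else 0

/-! The all-ones vector `𝟙` lies in the kernel of every Laplacian, so `𝟙ᵀ (W - 𝓛_G z) 𝟙 = 𝟙ᵀ W 𝟙`,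
which gives necessity. Conversely, a constant weighting `z = -t/2` turns `W - 𝓛_G z` into
`W + t L` with `L` the graph Laplacian, which is positive semidefinite with kernel spanned by `𝟙`
because `G` is connected. So `W` is positive on the nonzero vectors of `ker L`, and Finsler's lemma
yields a `t` making `W + t L` positive definite: the open sets `{x | 0 < xᵀ (W + k L) x}` increase
with `k ∈ ℕ` and cover the unit sphere, so by compactness a single one contains it. -/

lemma IsCompact.exists_forall_pos_add_mul {X : Type*} [TopologicalSpace X] {K : Set X}
    (hK : IsCompact K) {f g : X → ℝ} (hf : Continuous f) (hg : Continuous g)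
    (hg0 : ∀ x, 0 ≤ g x) (hfg : ∀ x ∈ K, g x = 0 → 0 < f x) :
    ∃ t : ℝ, ∀ x ∈ K, 0 < f x + t * g x := by
  let U : ℕ → Set X := fun k => {x | 0 < f x + k * g x}
  have hU_open (k : ℕ) : IsOpen (U k) :=
    isOpen_lt continuous_const (hf.add (continuous_const.mul hg))
  have hU_mono : Monotone U := fun k l hkl x (hx : 0 < f x + k * g x) =>
    show 0 < f x + l * g x by
      nlinarith [mul_le_mul_of_nonneg_right ((Nat.cast_le (α := ℝ)).2 hkl) (hg0 x)]
  have hKU : K ⊆ ⋃ k, U k := by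
    intro x hx
    rcases (hg0 x).eq_or_lt with hgx | hgx
    · exact Set.mem_iUnion.2 ⟨0, by simpa [U, ← hgx] using hfg x hx hgx.symm⟩
    · obtain ⟨k, hk⟩ := exists_nat_gt (-f x / g x)
      refine Set.mem_iUnion.2 ⟨k, ?_⟩
      show 0 < f x + k * g x
      linarith [(div_lt_iff₀ hgx).1 hk]
  obtain ⟨k, hk⟩ := hK.elim_directed_cover U hU_open hKU hU_mono.directed_le
  exact ⟨k, hk⟩

namespace Matrix

variable {n : Type*} [Fintype n]

lemma dotProduct_mulVec_smul_self {R : Type*} [CommSemiring R] (M : Matrix n n R) (c : R)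
    (x : n → R) : (c • x) ⬝ᵥ M *ᵥ (c • x) = c ^ 2 * (x ⬝ᵥ M *ᵥ x) := by
  rw [mulVec_smul, smul_dotProduct, dotProduct_smul, smul_eq_mul, smul_eq_mul]
  ring

lemma one_dotProduct_mulVec_one {R : Type*} [NonAssocSemiring R] (M : Matrix n n R) :
    1 ⬝ᵥ M *ᵥ 1 = ∑ i, ∑ j, M i j := by
  simp [mulVec, dotProduct]

lemma IsSymm.ext_of_dotProduct_mulVec_self [DecidableEq n] {R : Type*} [CommRing R]
    [IsAddTorsionFree R] {A B : Matrix n n R} (hA : A.IsSymm) (hB : B.IsSymm)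
    (h : ∀ x, x ⬝ᵥ A *ᵥ x = x ⬝ᵥ B *ᵥ x) : A = B := by
  ext a b
  have hab := h (Pi.single a 1 + Pi.single b 1)
  have haa := h (Pi.single a 1)
  have hbb := h (Pi.single b 1)
  simp only [mulVec_add, dotProduct_add, add_dotProduct, mulVec_single_one,
    single_one_dotProduct, col_apply] at hab haa hbb
  rw [hA.apply a b, hB.apply a b] at hab
  refine nsmul_right_injective two_ne_zero ?_
  simp only [two_nsmul]
  linear_combination hab - haa - hbb

/-- Finsler's lemma. -/
theorem exists_posDef_add_smul {A B : Matrix n n ℝ} (hA : A.IsSymm) (hB : B.PosSemidef)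
    (h : ∀ x ≠ 0, x ⬝ᵥ B *ᵥ x = 0 → 0 < x ⬝ᵥ A *ᵥ x) : ∃ t : ℝ, (A + t • B).PosDef := by
  obtain ⟨t, ht⟩ := (isCompact_sphere (0 : n → ℝ) 1).exists_forall_pos_add_mul
    (f := fun x => x ⬝ᵥ A *ᵥ x) (g := fun x => x ⬝ᵥ B *ᵥ x) (by fun_prop) (by fun_prop)
    (fun x => by simpa using hB.dotProduct_mulVec_nonneg x)
    (fun x hx => h x (ne_zero_of_mem_unit_sphere ⟨x, hx⟩))
  refine ⟨t, posDef_iff_dotProduct_mulVec.2 ⟨?_, fun x hx => ?_⟩⟩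
  · exact isHermitian_iff_isSymm.2 (hA.add ((isHermitian_iff_isSymm.1 hB.isHermitian).smul t))
  obtain ⟨c, u, hu, hc, rfl⟩ : ∃ c : ℝ, ∃ u ∈ Metric.sphere (0 : n → ℝ) 1, c ≠ 0 ∧ x = c • u := by
    have hx' : ‖x‖ ≠ 0 := norm_ne_zero_iff.2 hx
    exact ⟨‖x‖, ‖x‖⁻¹ • x, by simp [norm_smul, hx'], hx',
      by rw [smul_smul, mul_inv_cancel₀ hx', one_smul]⟩
  rw [star_trivial, add_mulVec, dotProduct_add, smul_mulVec, dotProduct_smul, smul_eq_mul,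
    dotProduct_mulVec_smul_self, dotProduct_mulVec_smul_self, mul_left_comm, ← mul_add]
  exact mul_pos (by positivity) (ht u hu)

end Matrix

theorem SimpleGraph.Connected.exists_eq_smul_one_of_dotProduct_mulVec_lapMatrix_eq_zero
    {V : Type*} [Fintype V] [DecidableEq V] {G : SimpleGraph V} [DecidableRel G.Adj]
    (hG : G.Connected) {x : V → ℝ} (hx : x ⬝ᵥ G.lapMatrix ℝ *ᵥ x = 0) : ∃ c : ℝ, x = c • 1 := by
  rw [← toLinearMap₂'_apply', G.lapMatrix_toLinearMap₂'_apply'_eq_zero_iff_forall_reachable] at hx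
  obtain ⟨v⟩ := hG.nonempty
  exact ⟨x v, funext fun i => by simpa using hx i v (hG.preconnected i v)⟩

section lapOfWeights

variable {V : Type*} [Fintype V] [DecidableEq V] (G : SimpleGraph V) [DecidableRel G.Adj]

lemma dotProduct_mulVec_lapOfWeights (z : V → V → ℝ) (x : V → ℝ) :
    x ⬝ᵥ lapOfWeights G z *ᵥ x = ∑ i, ∑ j, if G.Adj i j then z i j * (x i - x j) ^ 2 else 0 := by
  simp only [lapOfWeights, sum_mulVec, dotProduct_sum]
  refine Finset.sum_congr rfl fun i _ => Finset.sum_congr rfl fun j _ => ?_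
  split_ifs
  · simp only [smul_mulVec, vecMulVec_mulVec, dotProduct_smul, sub_dotProduct, dotProduct_sub,
      dotProduct_single_one, single_one_dotProduct, op_smul_eq_smul, smul_eq_mul]
    ring
  · simp

lemma isSymm_lapOfWeights (z : V → V → ℝ) : (lapOfWeights G z).IsSymm := by
  simp only [IsSymm, lapOfWeights, transpose_sum, apply_ite transpose, transpose_smul,
    transpose_vecMulVec, transpose_zero]

-- The factor `2`: each edge is summed over once in each orientation.
lemma lapOfWeights_const (c : ℝ) : lapOfWeights G (fun _ _ => c) = (2 * c) • G.lapMatrix ℝ := by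
  refine (isSymm_lapOfWeights G _).ext_of_dotProduct_mulVec_self
    ((SimpleGraph.isSymm_lapMatrix ℝ G).smul _) fun x => ?_
  rw [dotProduct_mulVec_lapOfWeights, smul_mulVec, dotProduct_smul, ← toLinearMap₂'_apply',
    SimpleGraph.lapMatrix_toLinearMap₂' ℝ G, smul_eq_mul, mul_div_assoc', mul_assoc,
    mul_div_cancel_left₀ _ two_ne_zero]
  simp [Finset.mul_sum, mul_ite]

end lapOfWeights

/-- For a connected graph `G` and symmetric `W`, there is an edge-weighting `z` with
`W − 𝓛_G(z)` positive definite iff `𝟙ᵀW𝟙 > 0`. -/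
theorem exists_lap_lt_iff {V : Type*} [Fintype V] [DecidableEq V]
    (G : SimpleGraph V) [DecidableRel G.Adj] (hG : G.Connected)
    (W : Matrix V V ℝ) (hW : W.IsSymm) :
    (∃ z : V → V → ℝ, (∀ i j, z i j = z j i) ∧ (W - lapOfWeights G z).PosDef) ↔
      0 < ∑ i, ∑ j, W i j := by
  have := hG.nonempty
  constructor
  · rintro ⟨z, -, hz⟩
    have h := hz.dotProduct_mulVec_pos (one_ne_zero : (1 : V → ℝ) ≠ 0)
    rw [star_trivial, sub_mulVec, dotProduct_sub, dotProduct_mulVec_lapOfWeights,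
      one_dotProduct_mulVec_one] at h
    simpa using h
  · intro hW1
    have hW_ker : ∀ x ≠ 0, x ⬝ᵥ G.lapMatrix ℝ *ᵥ x = 0 → 0 < x ⬝ᵥ W *ᵥ x := by
      intro x hx hLx
      obtain ⟨c, rfl⟩ := hG.exists_eq_smul_one_of_dotProduct_mulVec_lapMatrix_eq_zero hLx
      have hc : c ≠ 0 := by rintro rfl; simp at hx
      rw [dotProduct_mulVec_smul_self, one_dotProduct_mulVec_one]
      positivity
    obtain ⟨t, ht⟩ := exists_posDef_add_smul hW (G.posSemidef_lapMatrix ℝ) hW_ker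
    refine ⟨fun _ _ => -t / 2, fun _ _ => rfl, ?_⟩
    rwa [lapOfWeights_const, show 2 * (-t / 2) = -t by ring, neg_smul, sub_neg_eq_add]
end

section
/- Let G be a graph, W a symmetric V×V matrix with 𝟙ᵀW𝟙 = 0. If the infimum t_W(G) = inf{⟨W,X⟩ : 𝓛_G*(X) = 𝟙, X ⪰ 0} is finite (> −∞), then W𝟙 = 0. -/
/-!
For a vertex `k` and `w = eₖ + s 𝟙`, the matrices
`X(s) = ½ (diag (𝟙 - eₖ) + w wᵀ) = ½ I + ½ (w wᵀ - eₖ eₖᵀ)` are feasible: they are positive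
semidefinite, and `𝓛_G^*` only sees the differences `w i - w j`, which are those
of `eₖ`. As `𝟙ᵀ W 𝟙 = 0`, the objective `⟨W, X(s)⟩ = tr W / 2 + s (W 𝟙)ₖ` is affine in `s`, so it
is bounded below only if `(W 𝟙)ₖ = 0`.
-/

open Matrix

namespace Matrix

variable {n : Type*}

lemma vecMulVec_self_edge_eq_sq (u : n → ℝ) (i j : n) :
    vecMulVec u u i i - 2 * vecMulVec u u i j + vecMulVec u u j j = (u i - u j) ^ 2 := by
  simp only [vecMulVec_apply]
  ring

lemma trace_mul_vecMulVec_self [Fintype n] (W : Matrix n n ℝ) (u : n → ℝ) :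
    (W * vecMulVec u u).trace = u ⬝ᵥ W *ᵥ u := by
  rw [mul_vecMulVec, trace_vecMulVec, dotProduct_comm]

lemma IsSymm.dotProduct_mulVec_comm [Fintype n] {W : Matrix n n ℝ} (hW : W.IsSymm)
    (u v : n → ℝ) :
    v ⬝ᵥ W *ᵥ u = u ⬝ᵥ W *ᵥ v := by
  rw [dotProduct_mulVec, ← mulVec_transpose, hW, dotProduct_comm]

lemma IsSymm.dotProduct_mulVec_add_smul [Fintype n] {W : Matrix n n ℝ} (hW : W.IsSymm)
    (u v : n → ℝ) (s : ℝ) :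
    (u + s • v) ⬝ᵥ W *ᵥ (u + s • v)
      = u ⬝ᵥ W *ᵥ u + 2 * s * (u ⬝ᵥ W *ᵥ v) + s ^ 2 * (v ⬝ᵥ W *ᵥ v) := by
  simp only [mulVec_add, mulVec_smul, add_dotProduct, dotProduct_add, smul_dotProduct,
    dotProduct_smul, smul_eq_mul, hW.dotProduct_mulVec_comm u v]
  ring

lemma vecMulVec_single_one_self [DecidableEq n] (k : n) :
    vecMulVec (Pi.single k (1 : ℝ)) (Pi.single k 1) = diagonal (Pi.single k 1) := by
  rw [diagonal_single, single_eq_single_vecMulVec_single]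

end Matrix

lemma eq_zero_of_bddBelow_range_add_mul {a b : ℝ}
    (h : BddBelow (Set.range fun s : ℝ => a + s * b)) : b = 0 := by
  by_contra hb
  obtain ⟨lb, hlb⟩ := h
  have : lb ≤ a + (lb - a - 1) / b * b := hlb ⟨_, rfl⟩
  rw [div_mul_cancel₀ _ hb] at this
  linarith

section FeasibleCurve

variable {V : Type*} [DecidableEq V]

noncomputable def feasibleCurve (k : V) (s : ℝ) : Matrix V V ℝ :=
  (1 / 2 : ℝ) • (diagonal (1 - Pi.single k 1) +
    vecMulVec (Pi.single k 1 + s • 1) (Pi.single k 1 + s • 1))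

lemma feasibleCurve_posSemidef [Fintype V] (k : V) (s : ℝ) :
    (feasibleCurve k s).PosSemidef := by
  refine .smul (.add (.diagonal fun i => ?_) ?_) (by norm_num)
  · rcases eq_or_ne i k with rfl | hik <;> simp [*]
  · have := posSemidef_vecMulVec_self_star (Pi.single k 1 + s • (1 : V → ℝ))
    rwa [star_trivial] at this

lemma feasibleCurve_edge (k : V) (s : ℝ) {i j : V} (hij : i ≠ j) :
    feasibleCurve k s i i - 2 * feasibleCurve k s i j + feasibleCurve k s j j = 1 := by
  set e : V → ℝ := Pi.single k 1
  have hedge := vecMulVec_self_edge_eq_sq (e + s • 1) i j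
  have hshift : (e + s • 1) i - (e + s • 1) j = e i - e j := by simp
  have hsingle : (1 - e) i + (1 - e) j + (e i - e j) ^ 2 = 2 := by
    by_cases hi : i = k <;> by_cases hj : j = k
    · exact absurd (hi.trans hj.symm) hij
    all_goals norm_num [e, hi, hj]
  simp only [feasibleCurve, Matrix.smul_apply, Matrix.add_apply, smul_eq_mul,
    diagonal_apply_eq, diagonal_apply_ne _ hij]
  rw [hshift] at hedge
  linear_combination (hedge + hsingle) / 2

lemma trace_mul_feasibleCurve [Fintype V] {W : Matrix V V ℝ} (hW : W.IsSymm)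
    (h0 : 1 ⬝ᵥ W *ᵥ 1 = 0) (k : V) (s : ℝ) :
    (W * feasibleCurve k s).trace = W.trace / 2 + s * (W *ᵥ 1) k := by
  have hquad : (W * vecMulVec (Pi.single k 1 + s • 1) (Pi.single k 1 + s • 1)).trace
      = (W * vecMulVec (Pi.single k 1) (Pi.single k 1)).trace + 2 * s * (W *ᵥ 1) k := by
    rw [trace_mul_vecMulVec_self, trace_mul_vecMulVec_self, hW.dotProduct_mulVec_add_smul, h0,
      single_one_dotProduct k (W *ᵥ 1)]
    ring
  have hdiag : (W * diagonal (1 - Pi.single k 1)).trace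
      + (W * vecMulVec (Pi.single k 1) (Pi.single k 1)).trace = W.trace := by
    rw [vecMulVec_single_one_self, ← trace_add, ← Matrix.mul_add, diagonal_add]
    simp only [Pi.sub_apply, sub_add_cancel, Pi.one_apply, diagonal_one, Matrix.mul_one]
  rw [feasibleCurve, Matrix.mul_smul, Matrix.mul_add, trace_smul, trace_add, hquad, smul_eq_mul]
  linear_combination hdiag / 2

end FeasibleCurve

/-- If `𝟙ᵀW𝟙 = 0` and `t_W(G) = inf {⟨W,X⟩ : 𝓛_G^*(X) = 𝟙, X ⪰ 0}` is bounded below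
(finite), then `W𝟙 = 0`. -/
theorem ones_in_null_of_bddBelow {V : Type*} [Fintype V]
    (G : SimpleGraph V) (W : Matrix V V ℝ) (hW : W.IsSymm)
    (h0 : ∑ i, ∑ j, W i j = 0)
    (hbdd : BddBelow {r : ℝ | ∃ X : Matrix V V ℝ, X.PosSemidef ∧
      (∀ i j, G.Adj i j → X i i - 2 * X i j + X j j = 1) ∧ r = (W * X).trace}) :
    W *ᵥ (fun _ => (1 : ℝ)) = 0 := by
  classical
  have h1 : 1 ⬝ᵥ W *ᵥ 1 = 0 := by simpa [dotProduct, mulVec] using h0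
  funext k
  refine eq_zero_of_bddBelow_range_add_mul (a := W.trace / 2) (hbdd.mono ?_)
  rintro _ ⟨s, rfl⟩
  exact ⟨feasibleCurve k s, feasibleCurve_posSemidef k s,
    fun i j hij => feasibleCurve_edge k s hij.ne, (trace_mul_feasibleCurve hW h1 k s).symm⟩
end

section
/- Let K be a set of symmetric n×n matrices closed under the maps X ↦ Diag(h)·X·Diag(h) for all h ∈ ℝ₊ⁿ. If X̂ is an optimal solution of max{𝟙ᵀX𝟙 : tr(X)=1, X ∈ K, X ⪰ 0}, then diag(X̂) = μ·X̂𝟙 for some μ > 0. -/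
/-!
Let `S = 𝟙ᵀX̂𝟙` be the optimal value. Since `K` is a cone, rescaling any positive semidefinite
`Y ∈ K` to trace one shows `𝟙ᵀY𝟙 ≤ S · tr Y`. For `Y = Diag(h) X̂ Diag(h)` with `h ≥ 0` this says
that the quadratic form of `X̂ - S · Diag(diag X̂)` is nonpositive on the nonnegative orthant, while
it vanishes at the interior point `𝟙`. Hence its gradient at `𝟙` vanishes: `X̂𝟙 = S · diag X̂`.
Taking `h` a coordinate vector gives `S ≥ 1`, so `μ = S⁻¹` works.
-/

open Matrix

section

variable {ι : Type*} [Fintype ι]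

lemma sum_sum_le_mul_trace_of_le_of_trace_eq_one {K : Set (Matrix ι ι ℝ)}
    (hK : ∀ X ∈ K, ∀ c : ℝ, 0 < c → c • X ∈ K) {S : ℝ}
    (hopt : ∀ X ∈ K, X.PosSemidef → X.trace = 1 → ∑ i, ∑ j, X i j ≤ S)
    {Y : Matrix ι ι ℝ} (hYK : Y ∈ K) (hY : Y.PosSemidef) :
    ∑ i, ∑ j, Y i j ≤ S * Y.trace := by
  rcases hY.trace_nonneg.eq_or_lt with htr | htr
  · simp [hY.trace_eq_zero_iff.1 htr.symm]
  · have hle := hopt _ (hK Y hYK _ (inv_pos.2 htr)) (hY.smul (inv_pos.2 htr).le)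
      (by rw [trace_smul, smul_eq_mul, inv_mul_cancel₀ htr.ne'])
    simp only [Matrix.smul_apply, smul_eq_mul, ← Finset.mul_sum] at hle
    rwa [inv_mul_le_iff₀ htr, mul_comm] at hle

lemma Matrix.IsSymm.dotProduct_mulVec_eq_zero_of_isLocalMax {M : Matrix ι ι ℝ} (hM : M.IsSymm)
    {x v : ι → ℝ} (hmax : IsLocalMax (fun t : ℝ ↦ (x + t • v) ⬝ᵥ M *ᵥ (x + t • v)) 0) :
    v ⬝ᵥ M *ᵥ x = 0 := by
  have hexpand : (fun t : ℝ ↦ (x + t • v) ⬝ᵥ M *ᵥ (x + t • v)) =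
      fun t ↦ x ⬝ᵥ M *ᵥ x + t * (2 * v ⬝ᵥ M *ᵥ x) + t ^ 2 * (v ⬝ᵥ M *ᵥ v) := by
    have hsymm : x ⬝ᵥ M *ᵥ v = v ⬝ᵥ M *ᵥ x := by
      rw [dotProduct_mulVec, ← mulVec_transpose, hM.eq, dotProduct_comm]
    ext t
    simp only [mulVec_add, mulVec_smul, add_dotProduct, dotProduct_add, smul_dotProduct,
      dotProduct_smul, hsymm, smul_eq_mul]
    ring
  have hderiv := (((hasDerivAt_id' (x := (0 : ℝ))).mul_const (2 * v ⬝ᵥ M *ᵥ x)).const_add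
    (x ⬝ᵥ M *ᵥ x)).add ((hasDerivAt_pow 2 (0 : ℝ)).mul_const (v ⬝ᵥ M *ᵥ v))
  rw [hexpand] at hmax
  simpa using hmax.hasDerivAt_eq_zero hderiv

variable [DecidableEq ι]

lemma Matrix.IsSymm.mulVec_eq_zero_of_forall_nonneg_le {M : Matrix ι ι ℝ} (hM : M.IsSymm)
    {x : ι → ℝ} (hx : ∀ i, 0 < x i) (hmax : ∀ h, 0 ≤ h → h ⬝ᵥ M *ᵥ h ≤ x ⬝ᵥ M *ᵥ x) :
    M *ᵥ x = 0 := by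
  ext i
  rw [Pi.zero_apply, ← single_one_dotProduct i (M *ᵥ x)]
  refine hM.dotProduct_mulVec_eq_zero_of_isLocalMax ?_
  filter_upwards [Ioi_mem_nhds (neg_lt_zero.2 (hx i))] with t ht
  rw [zero_smul, add_zero]
  refine hmax _ fun j ↦ ?_
  rcases eq_or_ne j i with rfl | hj
  · simp only [Pi.add_apply, Pi.smul_apply, Pi.single_eq_same, smul_eq_mul, mul_one, Pi.zero_apply]
    linarith [Set.mem_Ioi.1 ht]
  · simpa [hj] using (hx j).le

lemma sum_sum_diagonal_mul_mul_diagonal (X : Matrix ι ι ℝ) (h : ι → ℝ) :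
    ∑ i, ∑ j, (diagonal h * X * diagonal h) i j = h ⬝ᵥ X *ᵥ h := by
  simp [dotProduct, mulVec, Finset.mul_sum, mul_comm, mul_left_comm]

lemma trace_diagonal_mul_mul_diagonal (X : Matrix ι ι ℝ) (h : ι → ℝ) :
    (diagonal h * X * diagonal h).trace = h ⬝ᵥ diagonal X.diag *ᵥ h := by
  simp [trace, dotProduct, mulVec_diagonal, mul_comm, mul_left_comm]

end

theorem diag_eq_mul_rowSums_of_optimal_general (n : ℕ)
    (K : Set (Matrix (Fin n) (Fin n) ℝ))
    (hK : ∀ X ∈ K, ∀ h : Fin n → ℝ, (∀ i, 0 ≤ h i) →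
      diagonal h * X * diagonal h ∈ K)
    (Xh : Matrix (Fin n) (Fin n) ℝ)
    (hXK : Xh ∈ K) (hXpsd : Xh.PosSemidef) (hXtr : Xh.trace = 1)
    (hopt : ∀ X ∈ K, X.PosSemidef → X.trace = 1 →
      ∑ i, ∑ j, X i j ≤ ∑ i, ∑ j, Xh i j) :
    ∃ μ : ℝ, 0 < μ ∧ ∀ i, Xh i i = μ * ∑ j, Xh i j := by
  set S := ∑ i, ∑ j, Xh i j
  have hcone : ∀ X ∈ K, ∀ c : ℝ, 0 < c → c • X ∈ K := fun X hX c hc ↦ by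
    convert hK X hX (fun _ ↦ √c) (fun _ ↦ Real.sqrt_nonneg c) using 1
    ext i j
    simp [mul_right_comm _ _ √c, Real.mul_self_sqrt hc.le]
  have hquad (h : Fin n → ℝ) (hh : 0 ≤ h) :
      h ⬝ᵥ Xh *ᵥ h ≤ S * (h ⬝ᵥ diagonal Xh.diag *ᵥ h) := by
    rw [← sum_sum_diagonal_mul_mul_diagonal, ← trace_diagonal_mul_mul_diagonal]
    exact sum_sum_le_mul_trace_of_le_of_trace_eq_one hcone hopt (hK Xh hXK h hh)
      (by simpa using hXpsd.mul_mul_conjTranspose_same (diagonal h))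
  have hS : 1 ≤ S := calc
    1 = ∑ i, Xh i i := hXtr.symm
    _ ≤ ∑ i, S * Xh i i := Finset.sum_le_sum fun i _ ↦ by
      simpa using hquad (Pi.single i 1) (Pi.single_nonneg.2 zero_le_one)
    _ = S * Xh.trace := (Finset.mul_sum _ _ _).symm
    _ = S := by rw [hXtr, mul_one]
  have hrow : (Xh - S • diagonal Xh.diag) *ᵥ 1 = 0 := by
    have hsymm : Xh.IsSymm := isHermitian_iff_isSymm.1 hXpsd.isHermitian
    refine (hsymm.sub ((isSymm_diagonal _).smul S)).mulVec_eq_zero_of_forall_nonneg_le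
      (fun _ ↦ one_pos) fun h hh ↦ ?_
    have hsum : (1 : Fin n → ℝ) ⬝ᵥ Xh *ᵥ 1 = S := by simp [dotProduct, mulVec, S]
    have htr : (1 : Fin n → ℝ) ⬝ᵥ diagonal Xh.diag *ᵥ 1 = 1 := by
      simpa [dotProduct, mulVec_diagonal, trace] using hXtr
    simp only [sub_mulVec, dotProduct_sub, smul_mulVec, dotProduct_smul, hsum, htr, smul_eq_mul]
    linarith [hquad h hh]
  refine ⟨S⁻¹, by positivity, fun i ↦ ?_⟩
  have hrow_i : ∑ j, Xh i j = S * Xh i i := by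
    simpa [sub_mulVec, mulVec, dotProduct, sub_eq_zero, diagonal_apply] using congrFun hrow i
  rw [hrow_i, inv_mul_cancel_left₀ (by positivity)]

/-- Gijswijt's lemma: if `K` is a set of symmetric matrices closed under the maps
`X ↦ Diag(h) X Diag(h)` for `h ≥ 0`, and `X̂` is optimal for
`max {𝟙ᵀX𝟙 : tr X = 1, X ∈ K, X ⪰ 0}`, then `diag(X̂) = μ X̂𝟙` for some `μ > 0`. -/
theorem diag_eq_mul_rowSums_of_optimal (n : ℕ)
    (K : Set (Matrix (Fin n) (Fin n) ℝ))
    (hKsymm : ∀ X ∈ K, X.IsSymm)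
    (hK : ∀ X ∈ K, ∀ h : Fin n → ℝ, (∀ i, 0 ≤ h i) →
      diagonal h * X * diagonal h ∈ K)
    (Xh : Matrix (Fin n) (Fin n) ℝ)
    (hXK : Xh ∈ K) (hXpsd : Xh.PosSemidef) (hXtr : Xh.trace = 1)
    (hopt : ∀ X ∈ K, X.PosSemidef → X.trace = 1 →
      ∑ i, ∑ j, X i j ≤ ∑ i, ∑ j, Xh i j) :
    ∃ μ : ℝ, 0 < μ ∧ ∀ i, Xh i i = μ * ∑ j, Xh i j :=
  diag_eq_mul_rowSums_of_optimal_general n K hK Xh hXK hXpsd hXtr hopt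
end
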